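/- Let V ∈ L¹(ℝ³) be radially symmetric with |·|^{−2} V_+ ∈ L¹(ℝ³) but |·|^{−2} V_− ∉ L¹(ℝ³), where V_± are the positive and negative parts of V. Then for every C > 0 there exists μ₀ such that for all μ ≥ μ₀: ∫_{ℝ³} V(x) (sin(√μ|x|)/(√μ|x|))² dx ≤ −C μ⁻¹. -/

import Mathlib

/-!
Since `(sin (√μ r) / (√μ r))² = sin² (√μ r) / (μ r²)`, passing to polar coordinates turns
`μ ∫ V (sin (√μ|x|) / (√μ|x|))²` into `4π ∫₀^∞ g(r) sin² (√μ r) dr`. The positive part of `g`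
contributes at most `∫ g₊`. For the negative part, `sin² = (1 - cos (2ωr)) / 2` and the
Riemann–Lebesgue lemma give `∫_a^∞ g₋ sin² (ωr) dr → ½ ∫_a^∞ g₋` for every `a > 0`, and these tails
are unbounded as `a → 0` because `g₋` is not integrable near `0`.
-/

open MeasureTheory Filter Topology Real Set Metric
open scoped FourierTransform

theorem tendsto_integral_mul_cos_atTop {f : ℝ → ℝ} (hf : Integrable f) :
    Tendsto (fun ω : ℝ => ∫ v, f v * cos (ω * v)) atTop (𝓝 0) := by
  have hre : ∀ w : ℝ, (∫ v, 𝐞 (-(v * w)) • (f v : ℂ)).re = ∫ v, f v * cos (2 * π * w * v) := by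
    intro w
    rw [← RCLike.re_eq_complex_re, ← integral_re]
    · congr 1 with v
      rw [Circle.smul_def, Real.fourierChar_apply, smul_eq_mul, mul_comm, RCLike.re_eq_complex_re,
        Complex.re_ofReal_mul, Complex.exp_ofReal_mul_I_re, ← cos_neg]
      ring_nf
    · simpa [mul_comm] using (Real.fourierIntegral_convergent_iff w).2 hf.ofReal
  have hRL := ((Complex.continuous_re.tendsto 0).comp
    (Real.tendsto_integral_exp_smul_cocompact (fun v => (f v : ℂ)))).mono_left atTop_le_cocompact
  have hscale : Tendsto (fun ω : ℝ => ω / (2 * π)) atTop atTop :=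
    tendsto_id.atTop_div_const (by positivity)
  simpa [Function.comp_def, hre, mul_div_cancel₀ _ two_pi_pos.ne'] using hRL.comp hscale

theorem tendsto_setIntegral_mul_sin_sq {f : ℝ → ℝ} {s : Set ℝ} (hs : MeasurableSet s)
    (hf : IntegrableOn f s) :
    Tendsto (fun ω : ℝ => ∫ r in s, f r * sin (ω * r) ^ 2) atTop (𝓝 ((∫ r in s, f r) / 2)) := by
  have hcos : Tendsto (fun ω : ℝ => ∫ r in s, f r * cos (2 * ω * r)) atTop (𝓝 0) := by
    have := (tendsto_integral_mul_cos_atTop ((integrable_indicator_iff hs).2 hf)).comp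
      (tendsto_id.const_mul_atTop two_pos)
    refine this.congr fun ω => ?_
    simp only [Function.comp_apply, id]
    rw [← integral_indicator hs]
    exact integral_congr_ae <| .of_forall fun r =>
      (indicator_mul_left s f (fun r => cos (2 * ω * r))).symm
  have hsin : ∀ ω : ℝ, ∫ r in s, f r * sin (ω * r) ^ 2 =
      (∫ r in s, f r) / 2 - (∫ r in s, f r * cos (2 * ω * r)) / 2 := by
    intro ω
    have hfcos : IntegrableOn (fun r => f r * cos (2 * ω * r)) s :=
      hf.mul_bdd (c := 1) (by fun_prop) (.of_forall fun r => abs_cos_le_one _)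
    rw [← integral_div, ← integral_div, ← integral_sub (hf.div_const 2) (hfcos.div_const 2)]
    congr 1 with r
    rw [sin_sq_eq_half_sub, ← mul_assoc]
    ring
  simp_rw [hsin]
  simpa using (hcos.div_const 2).const_sub ((∫ r in s, f r) / 2)

section

variable {f : ℝ → ℝ}

theorem aestronglyMeasurable_of_integrableOn_sq_mul
    (hf : IntegrableOn (fun r => r ^ 2 * f r) (Ioi 0)) :
    AEStronglyMeasurable f (volume.restrict (Ioi 0)) := by
  refine (hf.aestronglyMeasurable.mul
    (measurable_id.pow_const 2).inv.aestronglyMeasurable).congr ?_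
  filter_upwards [ae_restrict_mem measurableSet_Ioi] with r (hr : 0 < r)
  simp only [Pi.mul_apply, Pi.inv_apply, id]
  field_simp

theorem integrableOn_Ioi_of_integrableOn_sq_mul
    (hf : IntegrableOn (fun r => r ^ 2 * f r) (Ioi 0)) {a : ℝ} (ha : 0 < a) :
    IntegrableOn f (Ioi a) := by
  have hsub : Ioi a ⊆ Ioi 0 := Ioi_subset_Ioi ha.le
  refine ((hf.mono_set hsub).norm.const_mul (a ^ 2)⁻¹).mono'
    ((aestronglyMeasurable_of_integrableOn_sq_mul hf).mono_set hsub) ?_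
  filter_upwards [ae_restrict_mem measurableSet_Ioi] with r (hr : a < r)
  rw [norm_mul, norm_pow, Real.norm_eq_abs r, sq_abs, ← div_eq_inv_mul,
    le_div_iff₀ (by positivity), mul_comm]
  gcongr

theorem integrableOn_mul_sin_sq_of_integrableOn_sq_mul
    (hf : IntegrableOn (fun r => r ^ 2 * f r) (Ioi 0)) (ω : ℝ) :
    IntegrableOn (fun r => f r * sin (ω * r) ^ 2) (Ioi 0) := by
  refine (hf.norm.const_mul (ω ^ 2)).mono'
    ((aestronglyMeasurable_of_integrableOn_sq_mul hf).mul (by fun_prop)) (.of_forall fun r => ?_)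
  calc ‖f r * sin (ω * r) ^ 2‖ = ‖f r‖ * sin (ω * r) ^ 2 := by
        rw [norm_mul, Real.norm_of_nonneg (sq_nonneg _)]
    _ ≤ ‖f r‖ * (ω * r) ^ 2 := mul_le_mul_of_nonneg_left sin_sq_le_sq (norm_nonneg _)
    _ = ω ^ 2 * ‖r ^ 2 * f r‖ := by rw [norm_mul, norm_pow, Real.norm_eq_abs r, sq_abs]; ring

theorem exists_le_setIntegral_Ioi_of_not_integrableOn (hf0 : ∀ r, 0 ≤ f r)
    (hf : ∀ a > 0, IntegrableOn f (Ioi a)) (hnot : ¬ IntegrableOn f (Ioi 0)) (M : ℝ) :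
    ∃ a > 0, M ≤ ∫ r in Ioi a, f r := by
  by_contra! hbdd
  have hcover : AECover (volume.restrict (Ioi (0 : ℝ))) atTop
      fun n : ℕ => Ioi (1 / (n + 1 : ℝ)) :=
    aecover_Ioi_of_Ioi tendsto_one_div_add_atTop_nhds_zero_nat
  refine hnot (hcover.integrable_of_integral_bounded_of_nonneg_ae M (fun n => ?_)
    (.of_forall hf0) (.of_forall fun n => ?_))
  · exact (hf _ (by positivity)).restrict
  · have hpos : (0 : ℝ) < 1 / (n + 1) := by positivity
    rw [Measure.restrict_restrict measurableSet_Ioi, inter_eq_left.2 (Ioi_subset_Ioi hpos.le)]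
    exact (hbdd _ hpos).le

theorem tendsto_setIntegral_mul_sin_sq_atTop (hf0 : ∀ r, 0 ≤ f r)
    (hf : IntegrableOn (fun r => r ^ 2 * f r) (Ioi 0)) (hnot : ¬ IntegrableOn f (Ioi 0)) :
    Tendsto (fun ω => ∫ r in Ioi 0, f r * sin (ω * r) ^ 2) atTop atTop := by
  refine tendsto_atTop.2 fun M => ?_
  have htail : ∀ a > 0, IntegrableOn f (Ioi a) := fun a ha =>
    integrableOn_Ioi_of_integrableOn_sq_mul hf ha
  obtain ⟨a, ha, hM⟩ := exists_le_setIntegral_Ioi_of_not_integrableOn hf0 htail hnot (2 * M + 1)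
  have hlim := tendsto_setIntegral_mul_sin_sq measurableSet_Ioi (htail a ha)
  filter_upwards [hlim.eventually (eventually_ge_nhds (b := M) (by linarith))] with ω hω
  exact hω.trans <| setIntegral_mono_set (integrableOn_mul_sin_sq_of_integrableOn_sq_mul hf ω)
    (.of_forall fun r => mul_nonneg (hf0 r) (sq_nonneg _)) (Ioi_subset_Ioi ha.le).eventuallyLE

end

theorem tendsto_setIntegral_mul_sin_sq_atBot {g : ℝ → ℝ}
    (hpos : IntegrableOn (fun r => max (g r) 0) (Ioi 0))
    (hneg : IntegrableOn (fun r => r ^ 2 * max (-g r) 0) (Ioi 0))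
    (hnot : ¬ IntegrableOn (fun r => max (-g r) 0) (Ioi 0)) :
    Tendsto (fun ω => ∫ r in Ioi 0, g r * sin (ω * r) ^ 2) atTop atBot := by
  have hsplit : ∀ ω, ∫ r in Ioi 0, g r * sin (ω * r) ^ 2 ≤
      (∫ r in Ioi 0, max (g r) 0) - ∫ r in Ioi 0, max (-g r) 0 * sin (ω * r) ^ 2 := by
    intro ω
    have hpos_sin : IntegrableOn (fun r => max (g r) 0 * sin (ω * r) ^ 2) (Ioi 0) :=
      hpos.mul_bdd (c := 1) (by fun_prop) (.of_forall fun r => by simpa using sin_sq_le_one _)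
    calc ∫ r in Ioi 0, g r * sin (ω * r) ^ 2
        = ∫ r in Ioi 0, max (g r) 0 * sin (ω * r) ^ 2 - max (-g r) 0 * sin (ω * r) ^ 2 := by
          simp only [← sub_mul, max_zero_sub_max_neg_zero_eq_self]
      _ = (∫ r in Ioi 0, max (g r) 0 * sin (ω * r) ^ 2) -
            ∫ r in Ioi 0, max (-g r) 0 * sin (ω * r) ^ 2 :=
          integral_sub hpos_sin (integrableOn_mul_sin_sq_of_integrableOn_sq_mul hneg ω)
      _ ≤ _ := sub_le_sub_right (integral_mono hpos_sin hpos fun r =>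
          mul_le_of_le_one_right (le_max_right _ _) (sin_sq_le_one _)) _
  refine tendsto_atBot.2 fun b => ?_
  filter_upwards [(tendsto_setIntegral_mul_sin_sq_atTop (fun r => le_max_right _ _) hneg
    hnot).eventually_ge_atTop ((∫ r in Ioi 0, max (g r) 0) - b)] with ω hω
  linarith [hsplit ω]

section Radial

variable {E : Type*} [NormedAddCommGroup E] [NormedSpace ℝ E] [FiniteDimensional ℝ E]
  [MeasurableSpace E] [BorelSpace E] [Nontrivial E] (μ : Measure E) [μ.IsAddHaarMeasure]

theorem integrable_fun_norm_div_pow_iff {f : ℝ → ℝ} :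
    Integrable (fun x : E => f ‖x‖ / ‖x‖ ^ (Module.finrank ℝ E - 1)) μ ↔
      IntegrableOn f (Ioi 0) := by
  rw [integrable_fun_norm_addHaar μ (f := fun r => f r / r ^ (Module.finrank ℝ E - 1))]
  refine integrableOn_congr_fun (fun r (hr : 0 < r) => ?_) measurableSet_Ioi
  simp only [smul_eq_mul]
  field_simp

end Radial

theorem integral_fun_norm_mul_sinc_sq (g : ℝ → ℝ) {k : ℝ} (hk : 0 < k) :
    ∫ x : EuclideanSpace ℝ (Fin 3), g ‖x‖ * (sin (k * ‖x‖) / (k * ‖x‖)) ^ 2 =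
      3 * volume.real (ball (0 : EuclideanSpace ℝ (Fin 3)) 1) / k ^ 2 *
        ∫ r in Ioi 0, g r * sin (k * r) ^ 2 := by
  have hradial : ∫ r in Ioi 0, r ^ (3 - 1) • (g r * (sin (k * r) / (k * r)) ^ 2) =
      (∫ r in Ioi 0, g r * sin (k * r) ^ 2) / k ^ 2 := by
    rw [← integral_div]
    refine setIntegral_congr_fun measurableSet_Ioi fun r (hr : 0 < r) => ?_
    simp only [smul_eq_mul, Nat.reduceSub]
    field_simp
  rw [integral_fun_norm_addHaar volume (fun r => g r * (sin (k * r) / (k * r)) ^ 2),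
    finrank_euclideanSpace_fin, hradial, nsmul_eq_mul, smul_eq_mul]
  push_cast
  ring

theorem vmu_le_neg_const_div_mu
    (V : EuclideanSpace ℝ (Fin 3) → ℝ) (g : ℝ → ℝ)
    (hrad : ∀ x, V x = g ‖x‖)
    (hV1 : Integrable V)
    (hplus : Integrable (fun x => max (V x) 0 / ‖x‖ ^ 2))
    (hminus : ¬ Integrable (fun x => max (-V x) 0 / ‖x‖ ^ 2)) :
    ∀ C > (0 : ℝ), ∃ μ₀ : ℝ, ∀ μ ≥ μ₀,
      (∫ x, V x * (Real.sin (Real.sqrt μ * ‖x‖) / (Real.sqrt μ * ‖x‖)) ^ 2)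
        ≤ -C / μ := by
  obtain rfl : V = fun x => g ‖x‖ := funext hrad
  have hdim : Module.finrank ℝ (EuclideanSpace ℝ (Fin 3)) - 1 = 2 := by simp
  have hpos : IntegrableOn (fun r => max (g r) 0) (Ioi 0) := by
    rwa [← integrable_fun_norm_div_pow_iff (volume : Measure (EuclideanSpace ℝ (Fin 3))), hdim]
  have hnot : ¬ IntegrableOn (fun r => max (-g r) 0) (Ioi 0) := by
    rwa [← integrable_fun_norm_div_pow_iff (volume : Measure (EuclideanSpace ℝ (Fin 3))), hdim]
  have hneg : IntegrableOn (fun r => r ^ 2 * max (-g r) 0) (Ioi 0) := by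
    simpa using (integrable_fun_norm_addHaar volume (f := fun r => max (-g r) 0)).1 hV1.neg_part
  have hΦ := tendsto_setIntegral_mul_sin_sq_atBot hpos hneg hnot
  intro C hC
  set c := 3 * volume.real (ball (0 : EuclideanSpace ℝ (Fin 3)) 1)
  have hc : 0 < c := mul_pos three_pos <|
    ENNReal.toReal_pos (measure_ball_pos _ _ one_pos).ne' measure_ball_lt_top.ne
  obtain ⟨μ₀, hμ₀⟩ := eventually_atTop.1 <|
    ((hΦ.comp tendsto_sqrt_atTop).eventually_le_atBot (-C / c)).and (eventually_gt_atTop 0)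
  refine ⟨μ₀, fun μ hμ => ?_⟩
  obtain ⟨hle, hμ⟩ := hμ₀ μ hμ
  rw [integral_fun_norm_mul_sinc_sq g (sqrt_pos.2 hμ), sq_sqrt hμ.le]
  calc c / μ * ∫ r in Ioi 0, g r * sin (√μ * r) ^ 2 ≤ c / μ * (-C / c) := by gcongr; exact hle
    _ = -C / μ := by field_simp
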